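/- For all real parameters α, β, γ and k ≠ 0, the multiplication map Φ of SB(2,ℂ), Φ((x₁,y₁,z₁),(x₂,y₂,z₂)) = (x₁ e^{k z₂/2} + x₂ e^{−k z₁/2}, y₁ e^{k z₂/2} + y₂ e^{−k z₁/2}, z₁ + z₂), is a Poisson map from the product of two copies of the deformed bracket {·,·}_* on ℝ³ to {·,·}_*: for all smooth f,g: ℝ³ → ℝ, {f∘Φ, g∘Φ}_{product} = {f,g}_* ∘ Φ. -/

import Mathlib

/-- The `i`-th partial derivative of `f : ℝⁿ → ℝ` at `v`. -/
noncomputable def pd {n : ℕ} (i : Fin n) (f : (Fin n → ℝ) → ℝ) (v : Fin n → ℝ) : ℝ :=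
  fderiv ℝ f v (Pi.single i 1)

/-- The deformed bracket on `ℝ³` with coordinates `(x,y,z) = (v 0, v 1, v 2)`:
`{f,g}_* = αx(∂_y f ∂_z g − ∂_z f ∂_y g) + βy(∂_z f ∂_x g − ∂_x f ∂_z g)
         + (γ sinh(kz)/k)(∂_x f ∂_y g − ∂_y f ∂_x g)`,
so `{y,z}_* = αx`, `{z,x}_* = βy`, `{x,y}_* = γ sinh(kz)/k`. -/
noncomputable def defBr (α β γ k : ℝ) (f g : (Fin 3 → ℝ) → ℝ) (v : Fin 3 → ℝ) : ℝ :=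
  α * v 0 * (pd 1 f v * pd 2 g v - pd 2 f v * pd 1 g v)
  + β * v 1 * (pd 2 f v * pd 0 g v - pd 0 f v * pd 2 g v)
  + (γ * Real.sinh (k * v 2) / k) * (pd 0 f v * pd 1 g v - pd 1 f v * pd 0 g v)

/-- The product of two copies of the deformed bracket on `ℝ³ × ℝ³`:
`{F,G}(u,v) = {F(·,v), G(·,v)}_*(u) + {F(u,·), G(u,·)}_*(v)`. -/
noncomputable def defProdBr (α β γ k : ℝ) (F G : (Fin 3 → ℝ) × (Fin 3 → ℝ) → ℝ)
    (p : (Fin 3 → ℝ) × (Fin 3 → ℝ)) : ℝ :=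
  defBr α β γ k (fun u => F (u, p.2)) (fun u => G (u, p.2)) p.1
  + defBr α β γ k (fun w => F (p.1, w)) (fun w => G (p.1, w)) p.2

/-- The multiplication map of `SB(2,ℂ)` in the coordinates `(x,y,z)`:
`Φ((x₁,y₁,z₁),(x₂,y₂,z₂)) = (x₁e^{kz₂/2} + x₂e^{−kz₁/2}, y₁e^{kz₂/2} + y₂e^{−kz₁/2}, z₁+z₂)`. -/
noncomputable def sbMul (k : ℝ) (p : (Fin 3 → ℝ) × (Fin 3 → ℝ)) : Fin 3 → ℝ :=
  ![p.1 0 * Real.exp (k * p.2 2 / 2) + p.2 0 * Real.exp (-(k * p.1 2 / 2)),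
    p.1 1 * Real.exp (k * p.2 2 / 2) + p.2 1 * Real.exp (-(k * p.1 2 / 2)),
    p.1 2 + p.2 2]

noncomputable def L3 (a b c : ℝ) : (Fin 3 → ℝ) →L[ℝ] ℝ :=
  a • ContinuousLinearMap.proj 0 + b • ContinuousLinearMap.proj 1 + c • ContinuousLinearMap.proj 2

lemma L3_apply (a b c : ℝ) (v : Fin 3 → ℝ) : L3 a b c v = a * v 0 + b * v 1 + c * v 2 := by
  simp [L3]

lemma apply3 (L : (Fin 3 → ℝ) →L[ℝ] ℝ) (v : Fin 3 → ℝ) :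
    L v = v 0 * L (Pi.single 0 1) + v 1 * L (Pi.single 1 1) + v 2 * L (Pi.single 2 1) := by
  have hv : v = v 0 • (Pi.single 0 1 : Fin 3 → ℝ) + v 1 • (Pi.single 1 1 : Fin 3 → ℝ)
      + v 2 • (Pi.single 2 1 : Fin 3 → ℝ) := by
    funext j
    fin_cases j <;> simp [Pi.single_apply]
  conv_lhs => rw [hv]
  rw [map_add, map_add, map_smul, map_smul, map_smul]
  simp [smul_eq_mul]

lemma slot1_deriv (k : ℝ) (w u : Fin 3 → ℝ) :
    HasFDerivAt (fun u => sbMul k (u, w))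
      (ContinuousLinearMap.pi
        ![L3 (Real.exp (k * w 2 / 2)) 0 (w 0 * Real.exp (-(k * u 2 / 2)) * (-(k/2))),
          L3 0 (Real.exp (k * w 2 / 2)) (w 1 * Real.exp (-(k * u 2 / 2)) * (-(k/2))),
          L3 0 0 1]) u := by
  rw [hasFDerivAt_pi']
  intro i
  rw [ContinuousLinearMap.proj_pi]
  have hlin : HasFDerivAt (fun v : Fin 3 → ℝ => -(k * v 2 / 2))
      ((-(k/2)) • (ContinuousLinearMap.proj 2 : (Fin 3 → ℝ) →L[ℝ] ℝ)) u := by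
    have h0 : (fun v : Fin 3 → ℝ => -(k * v 2 / 2))
        = fun v => ((-(k/2)) • (ContinuousLinearMap.proj 2 : (Fin 3 → ℝ) →L[ℝ] ℝ)) v := by
      funext v; simp; ring
    rw [h0]
    exact ((-(k/2)) • (ContinuousLinearMap.proj 2 : (Fin 3 → ℝ) →L[ℝ] ℝ)).hasFDerivAt
  have hexp : HasFDerivAt (fun v : Fin 3 → ℝ => Real.exp (-(k * v 2 / 2)))
      (Real.exp (-(k * u 2 / 2)) • ((-(k/2)) • (ContinuousLinearMap.proj 2 : (Fin 3 → ℝ) →L[ℝ] ℝ))) u :=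
    HasDerivAt.comp_hasFDerivAt u (Real.hasDerivAt_exp _) hlin
  fin_cases i
  · have h : HasFDerivAt (fun v : Fin 3 → ℝ => v 0 * Real.exp (k * w 2 / 2) + w 0 * Real.exp (-(k * v 2 / 2)))
        (Real.exp (k * w 2 / 2) • (ContinuousLinearMap.proj 0 : (Fin 3 → ℝ) →L[ℝ] ℝ)
          + w 0 • (Real.exp (-(k * u 2 / 2)) • ((-(k/2)) • (ContinuousLinearMap.proj 2 : (Fin 3 → ℝ) →L[ℝ] ℝ)))) u :=
      ((ContinuousLinearMap.proj 0 : (Fin 3 → ℝ) →L[ℝ] ℝ).hasFDerivAt.mul_const _).add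
        (hexp.const_mul (w 0))
    show HasFDerivAt (fun v : Fin 3 → ℝ => sbMul k (v, w) 0) _ u
    have he : (fun v : Fin 3 → ℝ => sbMul k (v, w) 0)
        = fun v : Fin 3 → ℝ => v 0 * Real.exp (k * w 2 / 2) + w 0 * Real.exp (-(k * v 2 / 2)) := by
      funext v; simp [sbMul]
    rw [he]
    refine h.congr_fderiv ?_
    refine ContinuousLinearMap.ext fun v => ?_
    simp [L3_apply]
    ring
  · have h : HasFDerivAt (fun v : Fin 3 → ℝ => v 1 * Real.exp (k * w 2 / 2) + w 1 * Real.exp (-(k * v 2 / 2)))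
        (Real.exp (k * w 2 / 2) • (ContinuousLinearMap.proj 1 : (Fin 3 → ℝ) →L[ℝ] ℝ)
          + w 1 • (Real.exp (-(k * u 2 / 2)) • ((-(k/2)) • (ContinuousLinearMap.proj 2 : (Fin 3 → ℝ) →L[ℝ] ℝ)))) u :=
      ((ContinuousLinearMap.proj 1 : (Fin 3 → ℝ) →L[ℝ] ℝ).hasFDerivAt.mul_const _).add
        (hexp.const_mul (w 1))
    show HasFDerivAt (fun v : Fin 3 → ℝ => sbMul k (v, w) 1) _ u
    have he : (fun v : Fin 3 → ℝ => sbMul k (v, w) 1)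
        = fun v : Fin 3 → ℝ => v 1 * Real.exp (k * w 2 / 2) + w 1 * Real.exp (-(k * v 2 / 2)) := by
      funext v; simp [sbMul]
    rw [he]
    refine h.congr_fderiv ?_
    refine ContinuousLinearMap.ext fun v => ?_
    simp [L3_apply]
    ring
  · have h : HasFDerivAt (fun v : Fin 3 → ℝ => v 2 + w 2)
        ((ContinuousLinearMap.proj 2 : (Fin 3 → ℝ) →L[ℝ] ℝ)) u :=
      (ContinuousLinearMap.proj 2 : (Fin 3 → ℝ) →L[ℝ] ℝ).hasFDerivAt.add_const _
    show HasFDerivAt (fun v : Fin 3 → ℝ => sbMul k (v, w) 2) _ u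
    have he : (fun v : Fin 3 → ℝ => sbMul k (v, w) 2) = fun v : Fin 3 → ℝ => v 2 + w 2 := by
      funext v; simp [sbMul]
    rw [he]
    refine h.congr_fderiv ?_
    refine ContinuousLinearMap.ext fun v => ?_
    simp [L3_apply]

lemma slot2_deriv (k : ℝ) (u w : Fin 3 → ℝ) :
    HasFDerivAt (fun w => sbMul k (u, w))
      (ContinuousLinearMap.pi
        ![L3 (Real.exp (-(k * u 2 / 2))) 0 (u 0 * Real.exp (k * w 2 / 2) * (k/2)),
          L3 0 (Real.exp (-(k * u 2 / 2))) (u 1 * Real.exp (k * w 2 / 2) * (k/2)),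
          L3 0 0 1]) w := by
  rw [hasFDerivAt_pi']
  intro i
  rw [ContinuousLinearMap.proj_pi]
  have hlin : HasFDerivAt (fun v : Fin 3 → ℝ => k * v 2 / 2)
      ((k/2) • (ContinuousLinearMap.proj 2 : (Fin 3 → ℝ) →L[ℝ] ℝ)) w := by
    have h0 : (fun v : Fin 3 → ℝ => k * v 2 / 2)
        = fun v => ((k/2) • (ContinuousLinearMap.proj 2 : (Fin 3 → ℝ) →L[ℝ] ℝ)) v := by
      funext v; simp; ring
    rw [h0]
    exact ((k/2) • (ContinuousLinearMap.proj 2 : (Fin 3 → ℝ) →L[ℝ] ℝ)).hasFDerivAt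
  have hexp : HasFDerivAt (fun v : Fin 3 → ℝ => Real.exp (k * v 2 / 2))
      (Real.exp (k * w 2 / 2) • ((k/2) • (ContinuousLinearMap.proj 2 : (Fin 3 → ℝ) →L[ℝ] ℝ))) w :=
    HasDerivAt.comp_hasFDerivAt w (Real.hasDerivAt_exp _) hlin
  fin_cases i
  · show HasFDerivAt (fun v : Fin 3 → ℝ => sbMul k (u, v) 0) _ w
    have h : HasFDerivAt (fun v : Fin 3 → ℝ => u 0 * Real.exp (k * v 2 / 2) + v 0 * Real.exp (-(k * u 2 / 2)))
        (u 0 • (Real.exp (k * w 2 / 2) • ((k/2) • (ContinuousLinearMap.proj 2 : (Fin 3 → ℝ) →L[ℝ] ℝ)))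
          + Real.exp (-(k * u 2 / 2)) • (ContinuousLinearMap.proj 0 : (Fin 3 → ℝ) →L[ℝ] ℝ)) w :=
      (hexp.const_mul (u 0)).add
        ((ContinuousLinearMap.proj 0 : (Fin 3 → ℝ) →L[ℝ] ℝ).hasFDerivAt.mul_const _)
    have he : (fun v : Fin 3 → ℝ => sbMul k (u, v) 0)
        = fun v : Fin 3 → ℝ => u 0 * Real.exp (k * v 2 / 2) + v 0 * Real.exp (-(k * u 2 / 2)) := by
      funext v; simp [sbMul]
    rw [he]
    refine h.congr_fderiv ?_
    refine ContinuousLinearMap.ext fun v => ?_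
    simp [L3_apply]
    ring
  · show HasFDerivAt (fun v : Fin 3 → ℝ => sbMul k (u, v) 1) _ w
    have h : HasFDerivAt (fun v : Fin 3 → ℝ => u 1 * Real.exp (k * v 2 / 2) + v 1 * Real.exp (-(k * u 2 / 2)))
        (u 1 • (Real.exp (k * w 2 / 2) • ((k/2) • (ContinuousLinearMap.proj 2 : (Fin 3 → ℝ) →L[ℝ] ℝ)))
          + Real.exp (-(k * u 2 / 2)) • (ContinuousLinearMap.proj 1 : (Fin 3 → ℝ) →L[ℝ] ℝ)) w :=
      (hexp.const_mul (u 1)).add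
        ((ContinuousLinearMap.proj 1 : (Fin 3 → ℝ) →L[ℝ] ℝ).hasFDerivAt.mul_const _)
    have he : (fun v : Fin 3 → ℝ => sbMul k (u, v) 1)
        = fun v : Fin 3 → ℝ => u 1 * Real.exp (k * v 2 / 2) + v 1 * Real.exp (-(k * u 2 / 2)) := by
      funext v; simp [sbMul]
    rw [he]
    refine h.congr_fderiv ?_
    refine ContinuousLinearMap.ext fun v => ?_
    simp [L3_apply]
    ring
  · show HasFDerivAt (fun v : Fin 3 → ℝ => sbMul k (u, v) 2) _ w
    have h : HasFDerivAt (fun v : Fin 3 → ℝ => u 2 + v 2)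
        ((ContinuousLinearMap.proj 2 : (Fin 3 → ℝ) →L[ℝ] ℝ)) w :=
      (ContinuousLinearMap.proj 2 : (Fin 3 → ℝ) →L[ℝ] ℝ).hasFDerivAt.const_add _
    have he : (fun v : Fin 3 → ℝ => sbMul k (u, v) 2) = fun v : Fin 3 → ℝ => u 2 + v 2 := by
      funext v; simp [sbMul]
    rw [he]
    refine h.congr_fderiv ?_
    refine ContinuousLinearMap.ext fun v => ?_
    simp [L3_apply]

lemma pd_comp (f : (Fin 3 → ℝ) → ℝ) (Φ : (Fin 3 → ℝ) → (Fin 3 → ℝ))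
    (Φ' : (Fin 3 → ℝ) →L[ℝ] (Fin 3 → ℝ)) (u : Fin 3 → ℝ)
    (hf : DifferentiableAt ℝ f (Φ u)) (hΦ : HasFDerivAt Φ Φ' u) (i : Fin 3) :
    pd i (fun v => f (Φ v)) u =
      (Φ' (Pi.single i 1)) 0 * pd 0 f (Φ u) + (Φ' (Pi.single i 1)) 1 * pd 1 f (Φ u)
      + (Φ' (Pi.single i 1)) 2 * pd 2 f (Φ u) := by
  have h : HasFDerivAt (fun v => f (Φ v)) ((fderiv ℝ f (Φ u)).comp Φ') u :=
    hf.hasFDerivAt.comp u hΦ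
  unfold pd
  rw [h.fderiv]
  simp only [ContinuousLinearMap.coe_comp', Function.comp_apply]
  exact apply3 _ _

lemma pd_slot1_0 (f : (Fin 3 → ℝ) → ℝ) (hf : ∀ v, DifferentiableAt ℝ f v) (k : ℝ) (w u : Fin 3 → ℝ) :
    pd 0 (fun v => f (sbMul k (v, w))) u
      = Real.exp (k * w 2 / 2) * pd 0 f (sbMul k (u, w)) := by
  have h := pd_comp f (fun v => sbMul k (v, w)) _ u (hf _) (slot1_deriv k w u) 0
  simpa [ContinuousLinearMap.pi_apply, L3_apply, Pi.single_apply] using h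

lemma pd_slot1_1 (f : (Fin 3 → ℝ) → ℝ) (hf : ∀ v, DifferentiableAt ℝ f v) (k : ℝ) (w u : Fin 3 → ℝ) :
    pd 1 (fun v => f (sbMul k (v, w))) u
      = Real.exp (k * w 2 / 2) * pd 1 f (sbMul k (u, w)) := by
  have h := pd_comp f (fun v => sbMul k (v, w)) _ u (hf _) (slot1_deriv k w u) 1
  simpa [ContinuousLinearMap.pi_apply, L3_apply, Pi.single_apply] using h

lemma pd_slot1_2 (f : (Fin 3 → ℝ) → ℝ) (hf : ∀ v, DifferentiableAt ℝ f v) (k : ℝ) (w u : Fin 3 → ℝ) :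
    pd 2 (fun v => f (sbMul k (v, w))) u
      = w 0 * Real.exp (-(k * u 2 / 2)) * (-(k/2)) * pd 0 f (sbMul k (u, w))
        + w 1 * Real.exp (-(k * u 2 / 2)) * (-(k/2)) * pd 1 f (sbMul k (u, w))
        + pd 2 f (sbMul k (u, w)) := by
  have h := pd_comp f (fun v => sbMul k (v, w)) _ u (hf _) (slot1_deriv k w u) 2
  simpa [ContinuousLinearMap.pi_apply, L3_apply, Pi.single_apply] using h

lemma pd_slot2_0 (f : (Fin 3 → ℝ) → ℝ) (hf : ∀ v, DifferentiableAt ℝ f v) (k : ℝ) (u w : Fin 3 → ℝ) :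
    pd 0 (fun v => f (sbMul k (u, v))) w
      = Real.exp (-(k * u 2 / 2)) * pd 0 f (sbMul k (u, w)) := by
  have h := pd_comp f (fun v => sbMul k (u, v)) _ w (hf _) (slot2_deriv k u w) 0
  simpa [ContinuousLinearMap.pi_apply, L3_apply, Pi.single_apply] using h

lemma pd_slot2_1 (f : (Fin 3 → ℝ) → ℝ) (hf : ∀ v, DifferentiableAt ℝ f v) (k : ℝ) (u w : Fin 3 → ℝ) :
    pd 1 (fun v => f (sbMul k (u, v))) w
      = Real.exp (-(k * u 2 / 2)) * pd 1 f (sbMul k (u, w)) := by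
  have h := pd_comp f (fun v => sbMul k (u, v)) _ w (hf _) (slot2_deriv k u w) 1
  simpa [ContinuousLinearMap.pi_apply, L3_apply, Pi.single_apply] using h

lemma pd_slot2_2 (f : (Fin 3 → ℝ) → ℝ) (hf : ∀ v, DifferentiableAt ℝ f v) (k : ℝ) (u w : Fin 3 → ℝ) :
    pd 2 (fun v => f (sbMul k (u, v))) w
      = u 0 * Real.exp (k * w 2 / 2) * (k/2) * pd 0 f (sbMul k (u, w))
        + u 1 * Real.exp (k * w 2 / 2) * (k/2) * pd 1 f (sbMul k (u, w))
        + pd 2 f (sbMul k (u, w)) := by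
  have h := pd_comp f (fun v => sbMul k (u, v)) _ w (hf _) (slot2_deriv k u w) 2
  simpa [ContinuousLinearMap.pi_apply, L3_apply, Pi.single_apply] using h

lemma sinh_key (k z₁ z₂ : ℝ) :
    Real.sinh (k * (z₁ + z₂)) = Real.sinh (k * z₁) * (Real.exp (k * z₂ / 2) * Real.exp (k * z₂ / 2))
      + Real.sinh (k * z₂) * (Real.exp (-(k * z₁ / 2)) * Real.exp (-(k * z₁ / 2))) := by
  rw [show k * (z₁ + z₂) = k * z₁ + k * z₂ by ring, Real.sinh_add]
  rw [show Real.exp (k * z₂ / 2) * Real.exp (k * z₂ / 2) = Real.exp (k * z₂) by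
    rw [← Real.exp_add]; ring_nf]
  rw [show Real.exp (-(k * z₁ / 2)) * Real.exp (-(k * z₁ / 2)) = Real.exp (-(k * z₁)) by
    rw [← Real.exp_add]; ring_nf]
  rw [← Real.cosh_add_sinh, ← Real.cosh_sub_sinh]
  ring

/-- The multiplication map of `SB(2,ℂ)` is a Poisson map from the product of two
copies of the deformed bracket to the deformed bracket. -/
theorem sb_multiplication_is_poisson (α β γ k : ℝ) (hk : k ≠ 0) :
    ∀ f g : (Fin 3 → ℝ) → ℝ, ContDiff ℝ (⊤ : ℕ∞) f → ContDiff ℝ (⊤ : ℕ∞) g →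
      defProdBr α β γ k (fun p => f (sbMul k p)) (fun p => g (sbMul k p)) =
        fun p => defBr α β γ k f g (sbMul k p) := by
  intro f g hf hg
  have hdf : ∀ v, DifferentiableAt ℝ f v := fun v => (hf.differentiable (by simp)).differentiableAt
  have hdg : ∀ v, DifferentiableAt ℝ g v := fun v => (hg.differentiable (by simp)).differentiableAt
  funext p
  obtain ⟨u, w⟩ := p
  simp only [defProdBr, defBr]
  rw [pd_slot1_0 f hdf k w u, pd_slot1_1 f hdf k w u, pd_slot1_2 f hdf k w u,
      pd_slot1_0 g hdg k w u, pd_slot1_1 g hdg k w u, pd_slot1_2 g hdg k w u,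
      pd_slot2_0 f hdf k u w, pd_slot2_1 f hdf k u w, pd_slot2_2 f hdf k u w,
      pd_slot2_0 g hdg k u w, pd_slot2_1 g hdg k u w, pd_slot2_2 g hdg k u w]
  have hm0 : sbMul k (u, w) 0 = u 0 * Real.exp (k * w 2 / 2) + w 0 * Real.exp (-(k * u 2 / 2)) := by
    simp [sbMul]
  have hm1 : sbMul k (u, w) 1 = u 1 * Real.exp (k * w 2 / 2) + w 1 * Real.exp (-(k * u 2 / 2)) := by
    simp [sbMul]
  have hm2 : sbMul k (u, w) 2 = u 2 + w 2 := by simp [sbMul]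
  rw [hm0, hm1, hm2, sinh_key k (u 2) (w 2)]
  field_simp
  ring
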